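/- For simple random walk on ℤ^d (d ≥ 1) started at the origin and every n ∈ ℕ, the Shannon entropy of the range satisfies H(R(n)) ≥ −log₂(1 − 1/(2d)) · E[ |∂R(n)| − 1 ]. -/

import Mathlib

open Real

/-- A single step of the simple random walk on `ℤ^d`: the pair `(i, b)` encodes a move by
`+eᵢ` (if `b = true`) or `-eᵢ` (if `b = false`).  The uniform distribution on `Fin d × Bool`
corresponds to the uniform distribution on the `2d` unit vectors. -/
def step {d : ℕ} (a : Fin d × Bool) : Fin d → ℤ :=
  fun j => if j = a.1 then (if a.2 then 1 else -1) else 0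

/-- The position `S(k)` of the walk started at `z` after `k` steps, driven by the
sequence of i.i.d. uniform steps `ω : Fin n → Fin d × Bool` (meaningful for `k ≤ n`). -/
def walk {d n : ℕ} (z : Fin d → ℤ) (ω : Fin n → Fin d × Bool) (k : ℕ) : Fin d → ℤ :=
  z + ∑ i ∈ Finset.univ.filter (fun i : Fin n => (i : ℕ) < k), step (ω i)

/-- Probability of an event for the `n`-step simple random walk on `ℤ^d`:
the driving step sequences are uniform among the `(2d)^n` possibilities. -/
noncomputable def prW (d n : ℕ) (E : Set (Fin n → Fin d × Bool)) : ℝ :=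
  E.ncard / (2 * d) ^ n

/-- Expectation of a random variable of the `n`-step simple random walk on `ℤ^d`. -/
noncomputable def exW (d n : ℕ) (f : (Fin n → Fin d × Bool) → ℝ) : ℝ :=
  (∑ ω : Fin n → Fin d × Bool, f ω) / (2 * d) ^ n

/-- Shannon entropy (base 2) of a random variable `X` of the `n`-step walk:
`H(X) = ∑ₐ -P[X = a] · log₂ P[X = a]`. -/
noncomputable def entW {α : Type*} (d n : ℕ) (X : (Fin n → Fin d × Bool) → α) : ℝ :=
  ∑' a : α, -(prW d n {ω | X ω = a} * logb 2 (prW d n {ω | X ω = a}))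

/-- The range `R(n) = {S(0), …, S(n)}` of the `n`-step walk started at `z`. -/
def rangeW {d n : ℕ} (z : Fin d → ℤ) (ω : Fin n → Fin d × Bool) : Finset (Fin d → ℤ) :=
  (Finset.range (n + 1)).image (walk z ω)

/-- The inner boundary `∂A` of a finite set `A ⊆ ℤ^d`: the points of `A` adjacent
(at graph distance 1, i.e. reachable by a single step) to some vertex of the complement. -/
def innerBdry {d : ℕ} (A : Finset (Fin d → ℤ)) : Finset (Fin d → ℤ) :=
  A.filter fun x => ∃ a : Fin d × Bool, x + step a ∉ A

/-- The Euclidean (`L²`) norm on `ℤ^d`. -/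
noncomputable def eNorm {d : ℕ} (x : Fin d → ℤ) : ℝ :=
  Real.sqrt (∑ i, ((x i : ℝ)) ^ 2)

/-!
A walk with range `A` visits every point of the inner boundary `∂A`, and at the first visit
to a boundary point, unless it happens at the final time, the next step must stay in `A`,
which rules out at least one of the `2d` directions. Hence
`P[R(n) = A] ≤ (1 - 1/(2d))^(|∂A| - 1)`, and taking expectations in
`H(R(n)) = E[-log₂ P[R(n) = R]]` gives the bound.
-/

open scoped Finset

lemma sum_le_card_sub_one_mul_of_eq_zero {ι : Type*} [Fintype ι] {f : ι → ℝ} {M : ℝ}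
    (hf : ∀ i, f i ≤ M) {a : ι} (ha : f a = 0) : ∑ i, f i ≤ (Fintype.card ι - 1) * M := by
  classical
  have h := Finset.sum_le_card_nsmul (Finset.univ.erase a) f M fun i _ => hf i
  rwa [Finset.sum_erase _ ha, nsmul_eq_mul, Finset.card_erase_of_mem (Finset.mem_univ a),
    Nat.cast_pred (Finset.card_pos.mpr ⟨a, Finset.mem_univ a⟩), Finset.card_univ] at h

lemma walk_zero {d n : ℕ} (z : Fin d → ℤ) (ω : Fin n → Fin d × Bool) : walk z ω 0 = z := by
  simp [walk]

lemma walk_succ {d n : ℕ} (z : Fin d → ℤ) (ω : Fin (n + 1) → Fin d × Bool) (j : ℕ) :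
    walk z ω (j + 1) = walk (z + step (ω 0)) (Fin.tail ω) j := by
  simp only [walk, Finset.sum_filter, Fin.sum_univ_succ, Fin.val_zero, Fin.val_succ,
    Nat.zero_lt_succ, if_true, Nat.succ_lt_succ_iff, add_assoc, Fin.tail]

lemma start_mem_rangeW {d n : ℕ} (z : Fin d → ℤ) (ω : Fin n → Fin d × Bool) : z ∈ rangeW z ω :=
  Finset.mem_image.mpr ⟨0, by simp, walk_zero z ω⟩

lemma rangeW_succ {d n : ℕ} (z : Fin d → ℤ) (ω : Fin (n + 1) → Fin d × Bool) :
    rangeW z ω = insert z (rangeW (z + step (ω 0)) (Fin.tail ω)) := by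
  rw [rangeW, Finset.range_add_one', Finset.image_insert, Finset.map_eq_image, Finset.image_image,
    walk_zero]
  exact congrArg _ (Finset.image_congr fun j _ => walk_succ z ω j)

lemma innerBdry_nonempty {d : ℕ} (hd : 1 ≤ d) {A : Finset (Fin d → ℤ)} (hA : A.Nonempty) :
    (innerBdry A).Nonempty := by
  let i₀ : Fin d := ⟨0, hd⟩
  obtain ⟨x, hxA, hmax⟩ := A.exists_max_image (fun x => x i₀) hA
  refine ⟨x, Finset.mem_filter.mpr ⟨hxA, (i₀, true), fun hx => ?_⟩⟩
  simpa [step] using hmax _ hx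

section CoveringWalks

variable {d : ℕ}

def coveringWalks (A U : Finset (Fin d → ℤ)) (k : ℕ) (z : Fin d → ℤ) :
    Finset (Fin k → Fin d × Bool) :=
  Finset.univ.filter fun ω => rangeW z ω ⊆ A ∧ U ⊆ rangeW z ω

variable {A U : Finset (Fin d → ℤ)} {k : ℕ} {z : Fin d → ℤ}

lemma coveringWalks_eq_empty_of_notMem (hz : z ∉ A) : coveringWalks A U k z = ∅ :=
  Finset.filter_false_of_mem fun ω _ h => hz (h.1 (start_mem_rangeW z ω))

lemma tail_mem_coveringWalks {ω : Fin (k + 1) → Fin d × Bool}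
    (hω : ω ∈ coveringWalks A U (k + 1) z) :
    Fin.tail ω ∈ coveringWalks A (U.erase z) k (z + step (ω 0)) := by
  simp only [coveringWalks, Finset.mem_filter, Finset.mem_univ, true_and, rangeW_succ z ω,
    Finset.insert_subset_iff, Finset.subset_insert_iff] at hω ⊢
  exact ⟨hω.1.2, hω.2⟩

lemma card_coveringWalks_succ_le :
    #(coveringWalks A U (k + 1) z) ≤
      ∑ δ : Fin d × Bool, #(coveringWalks A (U.erase z) k (z + step δ)) := by
  rw [Finset.card_eq_sum_card_fiberwise (f := fun ω => ω 0) (t := Finset.univ)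
    fun _ _ => Finset.mem_univ _]
  refine Finset.sum_le_sum fun δ _ => Finset.card_le_card_of_injOn Fin.tail ?_ ?_
  · intro ω hω
    obtain ⟨hmem, rfl⟩ := Finset.mem_filter.mp (Finset.mem_coe.mp hω)
    exact tail_mem_coveringWalks hmem
  · intro ω hω ω' hω' h
    rw [← Fin.cons_self_tail ω, ← Fin.cons_self_tail ω', h,
      (Finset.mem_filter.mp (Finset.mem_coe.mp hω)).2,
      (Finset.mem_filter.mp (Finset.mem_coe.mp hω')).2]

end CoveringWalks

lemma card_coveringWalks_le {d : ℕ} (hd : 1 ≤ d) {A U : Finset (Fin d → ℤ)} (k : ℕ)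
    (hU : U ⊆ innerBdry A) (z : Fin d → ℤ) :
    (#(coveringWalks A U k z) : ℝ) ≤ (2 * d) ^ k * (1 - 1 / (2 * (d : ℝ))) ^ (#U - 1) := by
  set q : ℝ := 1 - 1 / (2 * (d : ℝ))
  have hd' : (1 : ℝ) ≤ d := by exact_mod_cast hd
  have hq0 : 0 ≤ q := sub_nonneg.mpr <| (div_le_one (by positivity)).mpr (by linarith)
  have hq1 : q ≤ 1 := sub_le_self _ (by positivity)
  have hsteps : (Fintype.card (Fin d × Bool) : ℝ) = 2 * d := by simp [mul_comm]
  induction k generalizing U z with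
  | zero =>
    rcases (coveringWalks A U 0 z).eq_empty_or_nonempty with h | ⟨ω, hω⟩
    · simp only [h, Finset.card_empty, Nat.cast_zero]
      positivity
    have hU : #U ≤ 1 :=
      (Finset.card_le_card (Finset.mem_filter.mp hω).2.2).trans
        (Finset.card_image_le.trans (by simp))
    have hcard : #(coveringWalks A U 0 z) ≤ 1 := Finset.card_le_univ _ |>.trans (by simp)
    simpa [Nat.sub_eq_zero_of_le hU] using hcard
  | succ k ih =>
    have hrec : (#(coveringWalks A U (k + 1) z) : ℝ) ≤
        ∑ δ : Fin d × Bool, (#(coveringWalks A (U.erase z) k (z + step δ)) : ℝ) := by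
      exact_mod_cast card_coveringWalks_succ_le
    have hterm : ∀ δ, (#(coveringWalks A (U.erase z) k (z + step δ)) : ℝ) ≤
        (2 * d) ^ k * q ^ (#(U.erase z) - 1) :=
      fun δ => ih ((U.erase_subset z).trans hU) _
    by_cases hzU : z ∈ U
    · obtain ⟨a, ha⟩ := (Finset.mem_filter.mp (hU hzU)).2
      have hescape : (#(coveringWalks A (U.erase z) k (z + step a)) : ℝ) = 0 := by
        rw [coveringWalks_eq_empty_of_notMem ha, Finset.card_empty, Nat.cast_zero]
      have hfactor : 2 * (d : ℝ) - 1 = 2 * d * q := by simp only [q]; field_simp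
      calc (#(coveringWalks A U (k + 1) z) : ℝ)
          ≤ (Fintype.card (Fin d × Bool) - 1) * ((2 * d) ^ k * q ^ (#(U.erase z) - 1)) :=
            hrec.trans (sum_le_card_sub_one_mul_of_eq_zero hterm hescape)
        _ = (2 * d - 1) * ((2 * d) ^ k * q ^ (#U - 1 - 1)) := by
            rw [hsteps, Finset.card_erase_of_mem hzU]
        _ = (2 * d) ^ (k + 1) * q ^ (#U - 1 - 1 + 1) := by rw [hfactor]; ring
        -- not an equality: `#U - 1 - 1 + 1 = 1 ≠ 0 = #U - 1` when `#U = 1`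
        _ ≤ (2 * d) ^ (k + 1) * q ^ (#U - 1) := by
          gcongr ?_ * ?_
          exact pow_le_pow_of_le_one hq0 hq1 (by omega)
    · calc (#(coveringWalks A U (k + 1) z) : ℝ)
          ≤ #(Finset.univ : Finset (Fin d × Bool)) • ((2 * d) ^ k * q ^ (#(U.erase z) - 1)) :=
            hrec.trans (Finset.sum_le_card_nsmul _ _ _ fun δ _ => hterm δ)
        _ = (2 * d) ^ (k + 1) * q ^ (#U - 1) := by
            rw [Finset.erase_eq_of_notMem hzU, nsmul_eq_mul, Finset.card_univ, hsteps]
            ring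

lemma prW_rangeW_eq_le {d : ℕ} (hd : 1 ≤ d) (n : ℕ) (A : Finset (Fin d → ℤ)) :
    prW d n {ω | rangeW 0 ω = A} ≤ (1 - 1 / (2 * (d : ℝ))) ^ (#(innerBdry A) - 1) := by
  have hsub : {ω : Fin n → Fin d × Bool | rangeW 0 ω = A} ⊆ coveringWalks A (innerBdry A) n 0 := by
    rintro ω rfl
    simp [coveringWalks, innerBdry]
  have hcard : ({ω : Fin n → Fin d × Bool | rangeW 0 ω = A}.ncard : ℝ) ≤
      #(coveringWalks A (innerBdry A) n 0) := by
    exact_mod_cast (Set.ncard_le_ncard hsub).trans (Set.ncard_coe_finset _).le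
  have hd' : (0 : ℝ) < d := Nat.cast_pos.mpr hd
  rw [prW, div_le_iff₀ (by positivity), mul_comm]
  exact hcard.trans (card_coveringWalks_le hd n le_rfl 0)

section Entropy

variable {d n : ℕ}

lemma prW_eq_card_div (E : Set (Fin n → Fin d × Bool)) [DecidablePred (· ∈ E)] :
    prW d n E = #(Finset.univ.filter (· ∈ E)) / (2 * d) ^ n := by
  rw [prW, ← Set.ncard_coe_finset, Finset.coe_filter]
  simp

lemma entW_eq_exW_neg_logb {α : Type*} (X : (Fin n → Fin d × Bool) → α) :
    entW d n X = exW d n fun ω => -logb 2 (prW d n {ω' | X ω' = X ω}) := by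
  classical
  have hfiber : ∀ a, prW d n {ω | X ω = a} = #(Finset.univ.filter (X · = a)) / (2 * d) ^ n :=
    fun a => prW_eq_card_div _
  have hvanish : ∀ a ∉ Finset.univ.image X, prW d n {ω | X ω = a} = 0 := by
    intro a ha
    rw [hfiber, Finset.filter_false_of_mem fun ω _ (hω : X ω = a) =>
      ha (hω ▸ Finset.mem_image_of_mem X (Finset.mem_univ ω)), Finset.card_empty, Nat.cast_zero,
      zero_div]
  rw [entW, tsum_eq_sum fun a ha => by rw [hvanish a ha]; simp, exW,
    Finset.sum_comp (fun a => -logb 2 (prW d n {ω' | X ω' = a})) X, Finset.sum_div]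
  refine Finset.sum_congr rfl fun a _ => ?_
  rw [nsmul_eq_mul, hfiber]
  ring

lemma exW_mono {f g : (Fin n → Fin d × Bool) → ℝ} (h : ∀ ω, f ω ≤ g ω) :
    exW d n f ≤ exW d n g :=
  div_le_div_of_nonneg_right (Finset.sum_le_sum fun ω _ => h ω) (by positivity)

lemma exW_const_mul (c : ℝ) (f : (Fin n → Fin d × Bool) → ℝ) :
    exW d n (fun ω => c * f ω) = c * exW d n f := by
  rw [exW, exW, ← Finset.mul_sum, mul_div_assoc]

end Entropy

lemma boundary_le_neg_logb_prW_rangeW {d n : ℕ} (hd : 1 ≤ d) (ω : Fin n → Fin d × Bool) :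
    -logb 2 (1 - 1 / (2 * (d : ℝ))) * (#(innerBdry (rangeW 0 ω)) - 1) ≤
      -logb 2 (prW d n {ω' | rangeW 0 ω' = rangeW 0 ω}) := by
  set A := rangeW (0 : Fin d → ℤ) ω
  have hbdry : 1 ≤ #(innerBdry A) :=
    (innerBdry_nonempty hd ⟨0, start_mem_rangeW 0 ω⟩).card_pos
  have hpos : 0 < prW d n {ω' | rangeW 0 ω' = A} := by
    have hd' : (0 : ℝ) < d := Nat.cast_pos.mpr hd
    have : 0 < {ω' | rangeW 0 ω' = A}.ncard := (Set.ncard_pos (Set.toFinite _)).mpr ⟨ω, rfl⟩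
    rw [prW]
    positivity
  have hlog := Real.logb_le_logb_of_le (b := 2) (by norm_num) hpos (prW_rangeW_eq_le hd n A)
  rw [Real.logb_pow, Nat.cast_sub hbdry, Nat.cast_one] at hlog
  linarith

/-- `H(R(n)) ≥ -log₂(1 - 1/(2d)) · E[|∂R(n)| - 1]` for SRW on `ℤ^d` started at the origin. -/
theorem entropy_range_ge_boundary :
    ∀ d : ℕ, 1 ≤ d → ∀ n : ℕ,
      entW d n (rangeW (0 : Fin d → ℤ)) ≥
        -Real.logb 2 (1 - 1 / (2 * (d : ℝ))) *
          exW d n (fun ω => ((innerBdry (rangeW (0 : Fin d → ℤ) ω)).card : ℝ) - 1) := by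
  intro d hd n
  rw [ge_iff_le, entW_eq_exW_neg_logb, ← exW_const_mul]
  exact exW_mono fun ω => boundary_le_neg_logb_prW_rangeW hd ω
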